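/- Spectral gap for the number-of-minus-particles chain (Lemma 3.12): Let β > 0 and d ≥ 1. There exists a constant C_β, depending only on β, such that for every positive integer N and every integer K with 0 ≤ K ≤ |Ω_N|, where Ω_N = {1,...,N}^d, the following holds. Let χ = {0,1,...,⌊(|Ω_N|-K)/2⌋}, let r(l,l-1) = l(K+l)/|Ω_N| and r(l,l+1) = (|Ω_N|-K-2l)(|Ω_N|-K-2l-1)β/|Ω_N|, let m̃ be the probability measure on χ with m̃(l) proportional to β^l·|Ω_N|!/(l!·(K+l)!·(|Ω_N|-K-2l)!), and let the Dirichlet form be E(f) = Σ_{l ∈ χ, l+1 ∈ χ} m̃(l)·r(l,l+1)·(f(l+1)-f(l))². Then for every f : χ → R with Σ_l m̃(l) f(l) = 0, one has Σ_l m̃(l) f(l)² ≤ C_β·E(f). -/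

import Mathlib

/-!
The chain has uniformly positive discrete curvature: for every edge `(l, l + 1)`,
`r(l, l+1) + r(l+1, l) - r(l+1, l+2) - r(l, l-1) ≥ min 1 β`, whatever `N`, `K` and `l`.
For a reversible birth-and-death chain such a bound `κ` gives the Bakry–Émery inequality
`κ E(g, g) ≤ ‖L g‖²` (summation by parts, then detailed balance and AM–GM on the cross terms).
For centred `f` the Poisson equation `-L g = f` is solved explicitly through its flux; then
`Var f = E(f, g) ≤ √(E(f, f) E(g, g))` and `κ E(g, g) ≤ ‖L g‖² = Var f` give `κ Var f ≤ E(f, f)`.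
-/

open Finset

/-- Unnormalized weight of the push-forward of the canonical measure `μ_{N,K}` under the
number of minus particles: `β^l · Ω! / (l! (K+l)! (Ω-K-2l)!)`. -/
noncomputable def bdWeight (β : ℝ) (Ω K l : ℕ) : ℝ :=
  β ^ l * (Ω.factorial : ℝ) /
    ((l.factorial : ℝ) * ((K + l).factorial : ℝ) * ((Ω - K - 2 * l).factorial : ℝ))

/-- The probability measure `m̃` on `χ = {0,1,...,⌊(Ω-K)/2⌋}`. -/
noncomputable def bdMeasure (β : ℝ) (Ω K : ℕ) (l : ℕ) : ℝ :=
  bdWeight β Ω K l / ∑ j ∈ Finset.range ((Ω - K) / 2 + 1), bdWeight β Ω K j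

/-- The upward jump rate `r(l, l+1) = (Ω-K-2l)(Ω-K-2l-1)β/Ω`. -/
noncomputable def bdRateUp (β : ℝ) (Ω K : ℕ) (l : ℕ) : ℝ :=
  ((Ω : ℝ) - (K : ℝ) - 2 * (l : ℝ)) * ((Ω : ℝ) - (K : ℝ) - 2 * (l : ℝ) - 1) * β / (Ω : ℝ)

/-- The downward jump rate `r(l, l-1) = l(K+l)/Ω`. -/
noncomputable def bdRateDown (β : ℝ) (Ω K : ℕ) (l : ℕ) : ℝ :=
  (l : ℝ) * ((K : ℝ) + (l : ℝ)) / (Ω : ℝ)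

namespace BirthDeath

-- At `l = 0` the truncated `l - 1` makes the downward term vanish.
def generator (u d g : ℕ → ℝ) (l : ℕ) : ℝ :=
  u l * (g (l + 1) - g l) + d l * (g (l - 1) - g l)

def dirichletForm (M : ℕ) (π u f g : ℕ → ℝ) : ℝ :=
  ∑ l ∈ range M, π l * u l * ((f (l + 1) - f l) * (g (l + 1) - g l))

def curvature (u d : ℕ → ℝ) (l : ℕ) : ℝ :=
  u l + d (l + 1) - u (l + 1) - d l

structure IsReversible (M : ℕ) (π u d : ℕ → ℝ) : Prop where
  measure_pos : ∀ l ≤ M, 0 < π l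
  up_pos : ∀ l < M, 0 < u l
  up_last : u M = 0
  down_zero : d 0 = 0
  detailed_balance : ∀ l < M, π l * u l = π (l + 1) * d (l + 1)

namespace IsReversible

variable {M : ℕ} {π u d : ℕ → ℝ}

theorem up_nonneg (hc : IsReversible M π u d) {l : ℕ} (hl : l ≤ M) : 0 ≤ u l := by
  rcases hl.lt_or_eq with hl | rfl
  · exact (hc.up_pos l hl).le
  · exact hc.up_last.ge

theorem edge_weight_nonneg (hc : IsReversible M π u d) {l : ℕ} (hl : l < M) : 0 ≤ π l * u l :=
  mul_nonneg (hc.measure_pos l hl.le).le (hc.up_pos l hl).le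

theorem dirichletForm_self_nonneg (hc : IsReversible M π u d) (f : ℕ → ℝ) :
    0 ≤ dirichletForm M π u f f :=
  sum_nonneg fun _ hl => mul_nonneg (hc.edge_weight_nonneg (mem_range.mp hl)) (mul_self_nonneg _)

theorem dirichletForm_sq_le (hc : IsReversible M π u d) (f g : ℕ → ℝ) :
    dirichletForm M π u f g ^ 2 ≤ dirichletForm M π u f f * dirichletForm M π u g g :=
  sum_sq_le_sum_mul_sum_of_sq_le_mul _
    (fun _ hl => mul_nonneg (hc.edge_weight_nonneg (mem_range.mp hl)) (mul_self_nonneg _))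
    (fun _ hl => mul_nonneg (hc.edge_weight_nonneg (mem_range.mp hl)) (mul_self_nonneg _))
    fun _ _ => le_of_eq (by ring)

theorem sum_mul_down (hc : IsReversible M π u d) (X : ℕ → ℝ) :
    ∑ l ∈ range (M + 1), π l * d l * X l = ∑ l ∈ range M, π l * u l * X (l + 1) := by
  rw [sum_range_succ', hc.down_zero, mul_zero, zero_mul, add_zero]
  refine sum_congr rfl fun l hl => ?_
  rw [hc.detailed_balance l (mem_range.mp hl)]

theorem sum_mul_up_mul_down (hc : IsReversible M π u d) (Y : ℕ → ℝ) :
    ∑ l ∈ range M, π l * u l * d l * Y l = ∑ l ∈ range M, π l * u l * (u (l + 1) * Y (l + 1)) := by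
  have h := hc.sum_mul_down fun l => u l * Y l
  rw [sum_range_succ, hc.up_last, zero_mul, mul_zero, add_zero] at h
  rw [← h]
  exact sum_congr rfl fun l _ => by ring

theorem sum_mul_generator (hc : IsReversible M π u d) (f g : ℕ → ℝ) :
    ∑ l ∈ range (M + 1), π l * f l * generator u d g l = -dirichletForm M π u f g := by
  have hup : ∑ l ∈ range (M + 1), π l * u l * (f l * (g (l + 1) - g l)) =
      ∑ l ∈ range M, π l * u l * (f l * (g (l + 1) - g l)) := by
    rw [sum_range_succ, hc.up_last, mul_zero, zero_mul, add_zero]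
  have hdown := hc.sum_mul_down fun l => f l * (g (l - 1) - g l)
  simp only [Nat.add_sub_cancel] at hdown
  calc _ = ∑ l ∈ range (M + 1), π l * u l * (f l * (g (l + 1) - g l)) +
        ∑ l ∈ range (M + 1), π l * d l * (f l * (g (l - 1) - g l)) := by
        rw [← sum_add_distrib]
        exact sum_congr rfl fun l _ => by rw [generator]; ring
    _ = _ := by
        rw [hup, hdown, dirichletForm, ← sum_neg_distrib, ← sum_add_distrib]
        exact sum_congr rfl fun l _ => by ring

theorem sum_range_mul_generator (hc : IsReversible M π u d) (g : ℕ → ℝ) {n : ℕ} (hn : n ≤ M) :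
    ∑ l ∈ range (n + 1), π l * generator u d g l = π n * u n * (g (n + 1) - g n) := by
  induction n with
  | zero => simp [generator, mul_assoc]
  | succ n ih =>
    rw [sum_range_succ, ih (by omega), generator, Nat.add_sub_cancel]
    linear_combination (g (n + 1) - g n) * hc.detailed_balance n (by omega)

theorem exists_generator_eq_neg (hc : IsReversible M π u d) (f : ℕ → ℝ)
    (hf : ∑ l ∈ range (M + 1), π l * f l = 0) :
    ∃ g : ℕ → ℝ, ∀ l ≤ M, generator u d g l = -f l := by
  -- the gradient of `g` is forced by the flux identity `sum_range_mul_generator`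
  let g : ℕ → ℝ := fun n => -∑ i ∈ range n, (∑ j ∈ range (i + 1), π j * f j) / (π i * u i)
  have hpartial : ∀ n ≤ M, ∑ l ∈ range (n + 1), π l * (generator u d g l + f l) = 0 := by
    intro n hn
    simp only [mul_add, sum_add_distrib, hc.sum_range_mul_generator g hn]
    rcases hn.lt_or_eq with hn | rfl
    · have hπ := (hc.measure_pos n hn.le).ne'
      have hu := (hc.up_pos n hn).ne'
      simp only [g, sum_range_succ]
      field_simp
      ring
    · rw [hc.up_last, hf]
      ring
  refine ⟨g, fun n hn => ?_⟩
  have hterm : π n * (generator u d g n + f n) = 0 := by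
    rw [← sum_range_succ_sub_sum fun l => π l * (generator u d g l + f l), hpartial n hn]
    cases n with
    | zero => simp
    | succ k => rw [hpartial k (by omega), sub_zero]
  exact eq_neg_of_add_eq_zero_left ((mul_eq_zero.mp hterm).resolve_left (hc.measure_pos n hn).ne')

theorem mul_dirichletForm_le_sum_sq_generator (hc : IsReversible M π u d) {κ : ℝ}
    (hκ : ∀ l < M, κ ≤ curvature u d l) (g : ℕ → ℝ) :
    κ * dirichletForm M π u g g ≤ ∑ l ∈ range (M + 1), π l * generator u d g l ^ 2 := by
  set G : ℕ → ℝ := fun l => g (l + 1) - g l with hG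
  have hcurv : κ * dirichletForm M π u g g ≤
      ∑ l ∈ range M, π l * u l * ((u l + d (l + 1) - u (l + 1)) * G l ^ 2) -
        ∑ l ∈ range M, π l * u l * d l * G l ^ 2 := by
    rw [dirichletForm, mul_sum, ← sum_sub_distrib]
    refine sum_le_sum fun l hl => ?_
    have hl := mem_range.mp hl
    have hκl := hκ l hl
    rw [curvature] at hκl
    nlinarith [mul_nonneg (hc.edge_weight_nonneg hl) (sq_nonneg (G l))]
  have hamgm : ∑ l ∈ range M, π l * u l * ((u l + d (l + 1) - u (l + 1)) * G l ^ 2) -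
        ∑ l ∈ range M, π l * u l * (u (l + 1) * G (l + 1) ^ 2) ≤
      ∑ l ∈ range M,
        π l * u l * ((u l + d (l + 1)) * G l ^ 2 - 2 * u (l + 1) * (G l * G (l + 1))) := by
    rw [← sum_sub_distrib]
    refine sum_le_sum fun l hl => ?_
    have hl := mem_range.mp hl
    nlinarith [mul_nonneg (mul_nonneg (hc.edge_weight_nonneg hl) (hc.up_nonneg (l := l + 1) hl))
      (sq_nonneg (G l - G (l + 1)))]
  have hsq : ∑ l ∈ range (M + 1), π l * generator u d g l ^ 2 =
      ∑ l ∈ range M,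
        π l * u l * ((u l + d (l + 1)) * G l ^ 2 - 2 * u (l + 1) * (G l * G (l + 1))) := by
    have hcross := hc.sum_mul_up_mul_down fun l => (g l - g (l - 1)) * G l
    simp only [Nat.add_sub_cancel] at hcross
    calc _ = -dirichletForm M π u (generator u d g) g := by
          rw [← hc.sum_mul_generator]
          exact sum_congr rfl fun l _ => by ring
      _ = ∑ l ∈ range M, π l * u l * ((u l + d (l + 1)) * G l ^ 2 - u (l + 1) * (G l * G (l + 1))) -
          ∑ l ∈ range M, π l * u l * d l * ((g l - g (l - 1)) * G l) := by
          rw [dirichletForm, ← sum_neg_distrib, ← sum_sub_distrib]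
          exact sum_congr rfl fun l _ => by simp only [generator, hG, Nat.add_sub_cancel]; ring
      _ = _ := by
          rw [hcross, ← sum_sub_distrib]
          exact sum_congr rfl fun l _ => by ring
  linarith [hc.sum_mul_up_mul_down fun l => G l ^ 2]

theorem mul_sum_sq_le_dirichletForm (hc : IsReversible M π u d) {κ : ℝ} (hκ₀ : 0 ≤ κ)
    (hκ : ∀ l < M, κ ≤ curvature u d l) (f : ℕ → ℝ)
    (hf : ∑ l ∈ range (M + 1), π l * f l = 0) :
    κ * ∑ l ∈ range (M + 1), π l * f l ^ 2 ≤ dirichletForm M π u f f := by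
  obtain ⟨g, hg⟩ := hc.exists_generator_eq_neg f hf
  set V := ∑ l ∈ range (M + 1), π l * f l ^ 2
  have hfg : dirichletForm M π u f g = V := by
    rw [← neg_neg (dirichletForm M π u f g), ← hc.sum_mul_generator, ← sum_neg_distrib]
    exact sum_congr rfl fun l hl => by rw [hg l (Nat.lt_succ_iff.mp (mem_range.mp hl))]; ring
  have hgg : κ * dirichletForm M π u g g ≤ V := by
    refine (hc.mul_dirichletForm_le_sum_sq_generator hκ g).trans_eq (sum_congr rfl fun l hl => ?_)
    rw [hg l (Nat.lt_succ_iff.mp (mem_range.mp hl))]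
    ring
  have hcs := hc.dirichletForm_sq_le f g
  rw [hfg] at hcs
  have hff := hc.dirichletForm_self_nonneg f
  have hV₀ : 0 ≤ V := sum_nonneg fun l hl =>
    mul_nonneg (hc.measure_pos l (Nat.lt_succ_iff.mp (mem_range.mp hl))).le (sq_nonneg (f l))
  rcases hV₀.eq_or_lt with hV | hV
  · rw [← hV, mul_zero]
    exact hff
  · refine le_of_mul_le_mul_right ?_ hV
    calc κ * V * V = κ * V ^ 2 := by ring
      _ ≤ κ * (dirichletForm M π u f f * dirichletForm M π u g g) := by gcongr
      _ = dirichletForm M π u f f * (κ * dirichletForm M π u g g) := by ring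
      _ ≤ dirichletForm M π u f f * V := by gcongr

end IsReversible

end BirthDeath

section ParticleChain

variable {β : ℝ} {Ω K l : ℕ}

theorem bdWeight_pos (hβ : 0 < β) : 0 < bdWeight β Ω K l := by
  unfold bdWeight
  positivity

theorem bdMeasure_pos (hβ : 0 < β) : 0 < bdMeasure β Ω K l :=
  div_pos (bdWeight_pos hβ) (sum_pos (fun _ _ => bdWeight_pos hβ) nonempty_range_add_one)

theorem bdRateDown_zero : bdRateDown β Ω K 0 = 0 := by
  simp [bdRateDown]

theorem two_le_sub_sub_two_mul (hl : K + 2 * (l + 1) ≤ Ω) : (2 : ℝ) ≤ Ω - K - 2 * l := by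
  have h : ((K + 2 * (l + 1) : ℕ) : ℝ) ≤ Ω := by exact_mod_cast hl
  push_cast at h
  linarith

theorem bdRateUp_pos (hβ : 0 < β) (hl : K + 2 * (l + 1) ≤ Ω) : 0 < bdRateUp β Ω K l := by
  have hs := two_le_sub_sub_two_mul hl
  have hΩ : (0 : ℝ) < Ω := by exact_mod_cast (by omega : 0 < Ω)
  unfold bdRateUp
  have : (0 : ℝ) < (Ω - K - 2 * l) * (Ω - K - 2 * l - 1) := by nlinarith
  positivity

theorem bdRateUp_half (hK : K ≤ Ω) : bdRateUp β Ω K ((Ω - K) / 2) = 0 := by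
  set M := (Ω - K) / 2
  obtain h | h : K + 2 * M = Ω ∨ K + 2 * M + 1 = Ω := by omega
  all_goals
    have h' : (Ω : ℝ) = _ := congrArg Nat.cast h.symm
    push_cast at h'
    simp only [bdRateUp, h']
    ring

theorem bdWeight_mul_bdRateUp (hl : K + 2 * (l + 1) ≤ Ω) :
    bdWeight β Ω K l * bdRateUp β Ω K l = bdWeight β Ω K (l + 1) * bdRateDown β Ω K (l + 1) := by
  obtain ⟨B, rfl⟩ : ∃ B, Ω = K + 2 * (l + 1) + B := ⟨Ω - (K + 2 * (l + 1)), by omega⟩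
  have h₀ : K + 2 * (l + 1) + B - K - 2 * l = B + 1 + 1 := by omega
  have h₁ : K + 2 * (l + 1) + B - K - 2 * (l + 1) = B := by omega
  simp only [bdWeight, bdRateUp, bdRateDown, h₀, h₁, ← add_assoc K l 1, Nat.factorial_succ]
  push_cast
  field_simp
  ring

theorem bdMeasure_mul_bdRateUp (hl : K + 2 * (l + 1) ≤ Ω) :
    bdMeasure β Ω K l * bdRateUp β Ω K l = bdMeasure β Ω K (l + 1) * bdRateDown β Ω K (l + 1) := by
  simp only [bdMeasure, div_mul_eq_mul_div, bdWeight_mul_bdRateUp hl]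

theorem isReversible_bdMeasure (hβ : 0 < β) (hK : K ≤ Ω) :
    BirthDeath.IsReversible ((Ω - K) / 2) (bdMeasure β Ω K) (bdRateUp β Ω K)
      (bdRateDown β Ω K) where
  measure_pos _ _ := bdMeasure_pos hβ
  up_pos _ hl := bdRateUp_pos hβ (by omega)
  up_last := bdRateUp_half hK
  down_zero := bdRateDown_zero
  detailed_balance _ hl := bdMeasure_mul_bdRateUp (by omega)

theorem min_one_le_curvature (hβ : 0 < β) (hl : K + 2 * (l + 1) ≤ Ω) :
    min 1 β ≤ BirthDeath.curvature (bdRateUp β Ω K) (bdRateDown β Ω K) l := by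
  have hs := two_le_sub_sub_two_mul hl
  have hΩ : (0 : ℝ) < Ω := by exact_mod_cast (by omega : 0 < Ω)
  have hcurv : BirthDeath.curvature (bdRateUp β Ω K) (bdRateDown β Ω K) l =
      (K + 2 * l + 1 + β * (4 * (Ω - K - 2 * l) - 6)) / Ω := by
    simp only [BirthDeath.curvature, bdRateUp, bdRateDown]
    push_cast
    field_simp
    ring
  rw [hcurv, le_div_iff₀ hΩ]
  have hm₁ := min_le_left 1 β
  have hmβ := min_le_right 1 β
  have hm₀ : 0 ≤ min 1 β := le_min zero_le_one hβ.le
  nlinarith [mul_nonneg (sub_nonneg.2 hm₁) (by positivity : (0 : ℝ) ≤ K + 2 * l + 1),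
    mul_nonneg (sub_nonneg.2 hmβ) (by linarith : (0 : ℝ) ≤ 4 * (Ω - K - 2 * l) - 6),
    mul_nonneg hm₀ (by linarith : (0 : ℝ) ≤ 3 * (Ω - K - 2 * l) - 5)]

theorem min_one_mul_variance_le (hβ : 0 < β) (hK : K ≤ Ω) (f : ℕ → ℝ)
    (hf : ∑ l ∈ range ((Ω - K) / 2 + 1), bdMeasure β Ω K l * f l = 0) :
    min 1 β * ∑ l ∈ range ((Ω - K) / 2 + 1), bdMeasure β Ω K l * f l ^ 2 ≤
      ∑ l ∈ range ((Ω - K) / 2), bdMeasure β Ω K l * bdRateUp β Ω K l * (f (l + 1) - f l) ^ 2 := by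
  have h := (isReversible_bdMeasure hβ hK).mul_sum_sq_le_dirichletForm (le_min zero_le_one hβ.le)
    (fun _ hl => min_one_le_curvature hβ (by omega)) f hf
  simpa only [BirthDeath.dirichletForm, ← sq] using h

end ParticleChain

theorem birth_death_spectral_gap_general (β : ℝ) (hβ : 0 < β) (d : ℕ) :
    ∃ C : ℝ, ∀ N : ℕ, 0 < N → ∀ K : ℕ, K ≤ N ^ d →
      ∀ f : ℕ → ℝ,
        (∑ l ∈ Finset.range ((N ^ d - K) / 2 + 1), bdMeasure β (N ^ d) K l * f l) = 0 →
        (∑ l ∈ Finset.range ((N ^ d - K) / 2 + 1), bdMeasure β (N ^ d) K l * f l ^ 2) ≤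
          C * ∑ l ∈ Finset.range ((N ^ d - K) / 2),
            bdMeasure β (N ^ d) K l * bdRateUp β (N ^ d) K l * (f (l + 1) - f l) ^ 2 := by
  refine ⟨(min 1 β)⁻¹, fun N _ K hK f hf => ?_⟩
  rw [inv_mul_eq_div, le_div_iff₀' (lt_min one_pos hβ)]
  exact min_one_mul_variance_le hβ hK f hf

/-- Lemma 3.12: uniform spectral gap for the birth-and-death chain of the
number of minus particles, with `Ω = |Ω_N| = N^d` and total charge `0 ≤ K ≤ |Ω_N|`. -/
theorem birth_death_spectral_gap (β : ℝ) (hβ : 0 < β) (d : ℕ) (hd : 1 ≤ d) :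
    ∃ C : ℝ, ∀ N : ℕ, 0 < N → ∀ K : ℕ, K ≤ N ^ d →
      ∀ f : ℕ → ℝ,
        (∑ l ∈ Finset.range ((N ^ d - K) / 2 + 1), bdMeasure β (N ^ d) K l * f l) = 0 →
        (∑ l ∈ Finset.range ((N ^ d - K) / 2 + 1), bdMeasure β (N ^ d) K l * f l ^ 2) ≤
          C * ∑ l ∈ Finset.range ((N ^ d - K) / 2),
            bdMeasure β (N ^ d) K l * bdRateUp β (N ^ d) K l * (f (l + 1) - f l) ^ 2 :=
  birth_death_spectral_gap_general β hβ d
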